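/- arXiv:2412.18127 — 7 statements merged into one kernel-verified Lean document; each statement's English description precedes it below -/
import Mathlib

section
/- For every complex number x with |x| < 1, one has (1 - x) · ∏_{m=1}^∞ (1 - x^{2m})(1 + x^{2m-1})² = Σ_{n=0}^∞ x^{n²}(1 - x^{2n+2})², where the infinite product is convergent (multipliable) and the series is absolutely convergent. -/
/-!
Gauss's identity `∏ (1 - x^{2j+2})(1 + x^{2j+1})² = ∑_{m ∈ ℤ} x^{m²}` (Jacobi's triple product
at `z = 1`) followed by a telescoping rearrangement of the theta series.

The finite identity `∏_{j<N} (1 + x^{2j+1})² = ∑_{|m| ≤ N} x^{m²} [2N, N+m]_{x²}` is Cauchy's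
`q`-binomial theorem for `∏_{i<2N} (x^{2N} + x^{2i+1})`, once the common factor `x^{3N²}` is
cancelled in `ℤ[X]`. After multiplying by `(x²; x²)_N`, the `m`-th summand tends to `x^{m²}` and is
bounded by a constant times `‖x‖^{m²}`, so Tannery's theorem passes to the limit `N → ∞`.
-/

open Finset Polynomial

section Algebra

variable {R : Type*} [CommRing R]

def qPochhammer (q : R) (n : ℕ) : R := ∏ j ∈ range n, (1 - q ^ (j + 1))

def qBinomial (q : R) : ℕ → ℕ → R
  | _, 0 => 1
  | 0, _ + 1 => 0
  | n + 1, k + 1 => qBinomial q n k + q ^ (k + 1) * qBinomial q n (k + 1)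

variable (q : R)

@[simp] theorem qBinomial_zero_right (n : ℕ) : qBinomial q n 0 = 1 := by cases n <;> rfl

theorem qBinomial_succ_succ (n k : ℕ) :
    qBinomial q (n + 1) (k + 1) = qBinomial q n k + q ^ (k + 1) * qBinomial q n (k + 1) := rfl

theorem qBinomial_eq_zero_of_lt : ∀ {n k : ℕ}, n < k → qBinomial q n k = 0
  | 0, _ + 1, _ => rfl
  | n + 1, k + 1, h => by
    rw [qBinomial_succ_succ, qBinomial_eq_zero_of_lt (by omega), qBinomial_eq_zero_of_lt (by omega),
      mul_zero, add_zero]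

@[simp] theorem qBinomial_self : ∀ n : ℕ, qBinomial q n n = 1
  | 0 => rfl
  | n + 1 => by rw [qBinomial_succ_succ, qBinomial_self n, qBinomial_eq_zero_of_lt q (by omega),
      mul_zero, add_zero]

theorem qPochhammer_succ (n : ℕ) : qPochhammer q (n + 1) = qPochhammer q n * (1 - q ^ (n + 1)) :=
  prod_range_succ _ _

theorem qBinomial_mul_qPochhammer_mul_qPochhammer : ∀ k l : ℕ,
    qBinomial q (k + l) k * qPochhammer q k * qPochhammer q l = qPochhammer q (k + l)
  | 0, l => by simp [qPochhammer]
  | k + 1, 0 => by simp [qPochhammer]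
  | k + 1, l + 1 => by
    have h₁ := qBinomial_mul_qPochhammer_mul_qPochhammer k (l + 1)
    have h₂ := qBinomial_mul_qPochhammer_mul_qPochhammer (k + 1) l
    rw [show k + (l + 1) = k + l + 1 by omega, qPochhammer_succ q l] at h₁
    rw [show k + 1 + l = k + l + 1 by omega, qPochhammer_succ q k] at h₂
    rw [show k + 1 + (l + 1) = k + l + 1 + 1 by omega, qBinomial_succ_succ,
      qPochhammer_succ q (k + l + 1), qPochhammer_succ q k, qPochhammer_succ q l]
    linear_combination (1 - q ^ (k + 1)) * h₁ + q ^ (k + 1) * (1 - q ^ (l + 1)) * h₂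

theorem map_qBinomial {S F : Type*} [CommRing S] [FunLike F R S] [RingHomClass F R S] (f : F) :
    ∀ n k : ℕ, f (qBinomial q n k) = qBinomial (f q) n k
  | _, 0 => by simp
  | 0, _ + 1 => map_zero f
  | n + 1, k + 1 => by
    simp [qBinomial_succ_succ, map_qBinomial f n k, map_qBinomial f n (k + 1)]

/-- Cauchy's `q`-binomial theorem, with `q = t²`. -/
theorem prod_add_mul_pow_odd (t a b : R) (n : ℕ) :
    ∏ i ∈ range n, (a + b * t ^ (2 * i + 1)) =
      ∑ k ∈ range (n + 1), t ^ (k ^ 2) * qBinomial (t ^ 2) n k * a ^ (n - k) * b ^ k := by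
  induction n generalizing b with
  | zero => simp
  | succ n ih =>
    have hmul_bt : ∑ k ∈ range (n + 1),
          t ^ ((k + 1) ^ 2) * qBinomial (t ^ 2) n k * a ^ (n - k) * b ^ (k + 1)
        = b * t * ∑ k ∈ range (n + 1), t ^ (k ^ 2) * qBinomial (t ^ 2) n k * a ^ (n - k) *
          (b * t ^ 2) ^ k := by
      rw [mul_sum]
      exact sum_congr rfl fun k _ => by ring
    have hmul_a : ∑ k ∈ range (n + 1),
          t ^ ((k + 1) ^ 2) * ((t ^ 2) ^ (k + 1) * qBinomial (t ^ 2) n (k + 1)) * a ^ (n - k) *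
            b ^ (k + 1) + a ^ (n + 1)
        = a * ∑ k ∈ range (n + 1), t ^ (k ^ 2) * qBinomial (t ^ 2) n k * a ^ (n - k) *
          (b * t ^ 2) ^ k := by
      rw [sum_range_succ, qBinomial_eq_zero_of_lt _ n.lt_succ_self, sum_range_succ', mul_add,
        mul_sum]
      simp only [mul_zero, zero_mul, add_zero, qBinomial_zero_right]
      congr 1
      · refine sum_congr rfl fun k hk => ?_
        rw [show n - k = n - (k + 1) + 1 by have := mem_range.1 hk; omega]
        ring
      · simp [pow_succ']
    rw [prod_range_succ']
    simp only [show ∀ i, a + b * t ^ (2 * (i + 1) + 1) = a + b * t ^ 2 * t ^ (2 * i + 1) from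
      fun i => by ring]
    rw [ih, sum_range_succ' _ (n + 1)]
    simp only [qBinomial_succ_succ, Nat.add_sub_add_right, mul_add, add_mul, sum_add_distrib,
      Nat.sub_zero, qBinomial_zero_right, pow_zero, mul_one]
    linear_combination -hmul_bt - hmul_a

theorem prod_pow_odd (x : R) : ∀ N : ℕ, ∏ i ∈ range N, x ^ (2 * i + 1) = x ^ (N ^ 2)
  | 0 => by simp
  | N + 1 => by rw [prod_range_succ, prod_pow_odd x N, ← pow_add]; ring_nf

theorem prod_pow_add_pow_odd (x : R) (N : ℕ) :
    ∏ i ∈ range (2 * N), (x ^ (2 * N) + x ^ (2 * i + 1)) =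
      x ^ (3 * N ^ 2) * ∏ j ∈ range N, (1 + x ^ (2 * j + 1)) ^ 2 := by
  have hlow : ∀ i ∈ range N, x ^ (2 * N) + x ^ (2 * i + 1) =
      x ^ (2 * i + 1) * (1 + x ^ (2 * (N - 1 - i) + 1)) := fun i hi => by
    rw [mul_add, mul_one, ← pow_add, show 2 * i + 1 + (2 * (N - 1 - i) + 1) = 2 * N by
      have := mem_range.1 hi; omega, add_comm]
  have hhigh : ∀ i, x ^ (2 * N) + x ^ (2 * (N + i) + 1) = x ^ (2 * N) * (1 + x ^ (2 * i + 1)) :=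
    fun i => by ring
  rw [two_mul N, prod_range_add, ← two_mul, prod_congr rfl hlow, prod_mul_distrib, prod_pow_odd,
    prod_range_reflect (fun j => 1 + x ^ (2 * j + 1)), funext hhigh, prod_mul_distrib, prod_const,
    card_range, prod_pow]
  ring

theorem sq_add_two_mul_mul_sub {N k : ℕ} (hk : k ≤ 2 * N) :
    k ^ 2 + 2 * N * (2 * N - k) = 3 * N ^ 2 + ((k : ℤ) - N).natAbs ^ 2 := by
  zify [hk]
  rw [sq_abs]
  ring

theorem pow_mul_prod_one_add_pow_odd_sq (x : R) (N : ℕ) :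
    x ^ (3 * N ^ 2) * ∏ j ∈ range N, (1 + x ^ (2 * j + 1)) ^ 2 =
      x ^ (3 * N ^ 2) * ∑ m ∈ Icc (-N : ℤ) N,
        x ^ (m.natAbs ^ 2) * qBinomial (x ^ 2) (2 * N) (N + m).toNat := by
  have hcauchy := prod_add_mul_pow_odd x (x ^ (2 * N)) 1 (2 * N)
  simp only [one_mul, one_pow, mul_one] at hcauchy
  rw [← prod_pow_add_pow_odd, hcauchy, mul_sum]
  refine sum_nbij' (fun k => (k : ℤ) - N) (fun m => (N + m).toNat) ?_ ?_ ?_ ?_ ?_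
  · intro k hk; simp only [mem_range, mem_Icc] at hk ⊢; omega
  · intro m hm; simp only [mem_range, mem_Icc] at hm ⊢; omega
  · intro k _; omega
  · intro m hm; simp only [mem_Icc] at hm; omega
  · intro k hk
    have hk' : k ≤ 2 * N := by have := mem_range.1 hk; omega
    rw [show ((N : ℤ) + ((k : ℤ) - N)).toNat = k by omega, ← pow_mul,
      mul_comm _ (qBinomial _ _ _), mul_assoc, ← pow_add, sq_add_two_mul_mul_sub hk', pow_add]
    ring

theorem prod_one_add_pow_odd_sq (x : R) (N : ℕ) :
    ∏ j ∈ range N, (1 + x ^ (2 * j + 1)) ^ 2 =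
      ∑ m ∈ Icc (-N : ℤ) N, x ^ (m.natAbs ^ 2) * qBinomial (x ^ 2) (2 * N) (N + m).toNat := by
  have h := mul_left_cancel₀ (pow_ne_zero (3 * N ^ 2) (X_ne_zero : (X : ℤ[X]) ≠ 0))
    (pow_mul_prod_one_add_pow_odd_sq (X : ℤ[X]) N)
  simpa [map_qBinomial] using congrArg (aeval x) h

end Algebra

section Analysis

open Filter Topology

variable {𝕜 : Type*} [NormedField 𝕜] {q : 𝕜}

theorem summable_norm_pow_of_le (hq : ‖q‖ < 1) {c : ℕ → ℕ} (hc : ∀ n, n ≤ c n) :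
    Summable fun n => ‖q ^ c n‖ := by
  refine (summable_geometric_of_lt_one (norm_nonneg q) hq).of_nonneg_of_le (fun n => norm_nonneg _)
    fun n => ?_
  rw [norm_pow]
  exact pow_le_pow_of_le_one (norm_nonneg q) hq.le (hc n)

theorem one_sub_pow_ne_zero (hq : ‖q‖ < 1) {n : ℕ} (hn : n ≠ 0) : 1 - q ^ n ≠ 0 := by
  rw [sub_ne_zero]
  intro h
  have := congrArg norm h
  rw [norm_pow, norm_one] at this
  exact (pow_lt_one₀ (norm_nonneg q) hq hn).ne' this

theorem qPochhammer_ne_zero (hq : ‖q‖ < 1) (n : ℕ) : qPochhammer q n ≠ 0 :=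
  prod_ne_zero_iff.2 fun j _ => one_sub_pow_ne_zero hq j.succ_ne_zero

theorem summable_norm_neg_pow_succ (hq : ‖q‖ < 1) : Summable fun j : ℕ => ‖-q ^ (j + 1)‖ := by
  simpa only [norm_neg] using summable_norm_pow_of_le hq fun n => n.le_succ

theorem multipliable_one_sub_pow_succ [CompleteSpace 𝕜] (hq : ‖q‖ < 1) :
    Multipliable fun j : ℕ => 1 - q ^ (j + 1) := by
  simp only [sub_eq_add_neg]
  exact multipliable_one_add_of_summable (summable_norm_neg_pow_succ hq)

theorem tprod_one_sub_pow_succ_ne_zero [CompleteSpace 𝕜] (hq : ‖q‖ < 1) :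
    ∏' j : ℕ, (1 - q ^ (j + 1)) ≠ 0 := by
  simp only [sub_eq_add_neg]
  exact tprod_one_add_ne_zero_of_summable
    (fun j => by rw [← sub_eq_add_neg]; exact one_sub_pow_ne_zero hq j.succ_ne_zero)
    (summable_norm_neg_pow_succ hq)

theorem tendsto_qPochhammer [CompleteSpace 𝕜] (hq : ‖q‖ < 1) :
    Tendsto (qPochhammer q) atTop (𝓝 (∏' j : ℕ, (1 - q ^ (j + 1)))) :=
  (multipliable_one_sub_pow_succ hq).tendsto_prod_tprod_nat

theorem qBinomial_eq_div (hq : ‖q‖ < 1) (k l : ℕ) :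
    qBinomial q (k + l) k = qPochhammer q (k + l) / (qPochhammer q k * qPochhammer q l) := by
  rw [eq_div_iff (mul_ne_zero (qPochhammer_ne_zero hq k) (qPochhammer_ne_zero hq l)), ← mul_assoc,
    qBinomial_mul_qPochhammer_mul_qPochhammer]

theorem exists_norm_qPochhammer_mul_qBinomial_le [CompleteSpace 𝕜] (hq : ‖q‖ < 1) :
    ∃ B, ∀ N n k : ℕ, ‖qPochhammer q N * qBinomial q n k‖ ≤ B := by
  obtain ⟨D, hD⟩ := isBounded_iff_forall_norm_le.1
    (Metric.isBounded_range_of_tendsto _ (tendsto_qPochhammer hq))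
  obtain ⟨C, hC⟩ := isBounded_iff_forall_norm_le.1 (Metric.isBounded_range_of_tendsto _
    ((tendsto_qPochhammer hq).inv₀ (tprod_one_sub_pow_succ_ne_zero hq)))
  have hD' n : ‖qPochhammer q n‖ ≤ D := hD _ ⟨n, rfl⟩
  have hC' n : ‖(qPochhammer q n)⁻¹‖ ≤ C := hC _ ⟨n, rfl⟩
  have hD0 : 0 ≤ D := (norm_nonneg _).trans (hD' 0)
  have hC0 : 0 ≤ C := (norm_nonneg _).trans (hC' 0)
  refine ⟨D * D * (C * C), fun N n k => ?_⟩
  rcases lt_or_ge n k with hnk | hkn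
  · rw [qBinomial_eq_zero_of_lt q hnk, mul_zero, norm_zero]
    positivity
  obtain ⟨l, rfl⟩ := Nat.exists_eq_add_of_le hkn
  rw [qBinomial_eq_div hq, div_eq_mul_inv, mul_inv, ← mul_assoc, norm_mul, norm_mul, norm_mul]
  gcongr <;> first | exact hD' _ | exact hC' _

theorem tendsto_qPochhammer_mul_qBinomial [CompleteSpace 𝕜] (hq : ‖q‖ < 1) (m : ℤ) :
    Tendsto (fun N : ℕ => qPochhammer q N * qBinomial q (2 * N) (N + m).toNat) atTop (𝓝 1) := by
  have hL := mul_ne_zero (tprod_one_sub_pow_succ_ne_zero hq) (tprod_one_sub_pow_succ_ne_zero hq)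
  have hP := tendsto_qPochhammer hq
  have h₂ : Tendsto (fun N : ℕ => 2 * N) atTop atTop :=
    tendsto_atTop_atTop.2 fun b => ⟨b, fun a ha => by omega⟩
  have hplus : Tendsto (fun N : ℕ => ((N : ℤ) + m).toNat) atTop atTop :=
    tendsto_atTop_atTop.2 fun b => ⟨b + m.natAbs, fun a ha => by omega⟩
  have hminus : Tendsto (fun N : ℕ => ((N : ℤ) - m).toNat) atTop atTop :=
    tendsto_atTop_atTop.2 fun b => ⟨b + m.natAbs, fun a ha => by omega⟩
  have hlim := (hP.mul (hP.comp h₂)).div ((hP.comp hplus).mul (hP.comp hminus)) hL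
  rw [div_self hL] at hlim
  refine hlim.congr' ?_
  filter_upwards [eventually_ge_atTop m.natAbs] with N hN
  simp only [Pi.div_apply, Function.comp_apply]
  rw [show 2 * N = ((N : ℤ) + m).toNat + ((N : ℤ) - m).toNat by omega, qBinomial_eq_div hq,
    mul_div_assoc]

variable {x : 𝕜}

theorem summable_int_natAbs {E : Type*} [NormedAddCommGroup E] [CompleteSpace E] {g : ℕ → E}
    (hg : Summable g) : Summable fun m : ℤ => g m.natAbs :=
  summable_int_iff_summable_nat_and_neg.2 ⟨by simpa using hg, by simpa using hg⟩

theorem multipliable_one_sub_pow_mul_one_add_pow_sq [CompleteSpace 𝕜] (hx : ‖x‖ < 1) :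
    Multipliable fun j : ℕ => (1 - x ^ (2 * j + 2)) * (1 + x ^ (2 * j + 1)) ^ 2 := by
  have hq : ‖x ^ 2‖ < 1 := by rw [norm_pow]; exact pow_lt_one₀ (norm_nonneg x) hx two_ne_zero
  have h₁ : Multipliable fun j : ℕ => 1 - x ^ (2 * j + 2) := by
    convert multipliable_one_sub_pow_succ hq using 3 with j
    rw [← pow_mul, mul_add, mul_one]
  have h₂ : Multipliable fun j : ℕ => 1 + x ^ (2 * j + 1) :=
    multipliable_one_add_of_summable (summable_norm_pow_of_le hx fun j => by omega)
  exact h₁.mul (h₂.pow 2)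

theorem tprod_one_sub_pow_mul_one_add_pow_sq [CompleteSpace 𝕜] (hx : ‖x‖ < 1) :
    ∏' j : ℕ, (1 - x ^ (2 * j + 2)) * (1 + x ^ (2 * j + 1)) ^ 2 = ∑' m : ℤ, x ^ (m.natAbs ^ 2) := by
  have hq : ‖x ^ 2‖ < 1 := by rw [norm_pow]; exact pow_lt_one₀ (norm_nonneg x) hx two_ne_zero
  obtain ⟨B, hB⟩ := exists_norm_qPochhammer_mul_qBinomial_le hq
  let F : ℕ → ℤ → 𝕜 := fun N => Set.indicator (Icc (-(N : ℤ)) N) fun m =>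
    x ^ (m.natAbs ^ 2) * (qPochhammer (x ^ 2) N * qBinomial (x ^ 2) (2 * N) (N + m).toNat)
  have hpartial N : ∏ j ∈ range N, (1 - x ^ (2 * j + 2)) * (1 + x ^ (2 * j + 1)) ^ 2 =
      ∑' m, F N m := by
    have hP : ∏ j ∈ range N, (1 - x ^ (2 * j + 2)) = qPochhammer (x ^ 2) N :=
      prod_congr rfl fun j _ => by rw [← pow_mul, mul_add, mul_one]
    rw [prod_mul_distrib, hP, prod_one_add_pow_odd_sq, mul_sum, sum_eq_tsum_indicator]
    refine tsum_congr fun m => ?_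
    simp only [F]
    congr 1
    ext m
    ring
  have hterm (m : ℤ) : Tendsto (fun N => F N m) atTop (𝓝 (x ^ (m.natAbs ^ 2))) := by
    have h := (tendsto_qPochhammer_mul_qBinomial hq m).const_mul (x ^ (m.natAbs ^ 2))
    rw [mul_one] at h
    refine h.congr' ?_
    filter_upwards [eventually_ge_atTop m.natAbs] with N hN
    simp only [F]
    rw [Set.indicator_of_mem (by simp only [coe_Icc, Set.mem_Icc]; omega)]
  have hbound : Summable fun m : ℤ => B * ‖x ^ (m.natAbs ^ 2)‖ := (summable_int_natAbs
    (summable_norm_pow_of_le hx fun n => Nat.le_self_pow two_ne_zero n)).mul_left B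
  have hF : Tendsto (fun N => ∑' m, F N m) atTop (𝓝 (∑' m : ℤ, x ^ (m.natAbs ^ 2))) :=
    tendsto_tsum_of_dominated_convergence hbound hterm <| Eventually.of_forall fun N m =>
      (norm_indicator_le_norm_self _ _).trans <| by
        rw [norm_mul, mul_comm]
        exact mul_le_mul_of_nonneg_right (hB _ _ _) (norm_nonneg _)
  refine tendsto_nhds_unique ?_ hF
  simpa only [hpartial] using
    (multipliable_one_sub_pow_mul_one_add_pow_sq hx).tendsto_prod_tprod_nat

theorem summable_norm_pow_sq_mul_one_sub_pow_sq (hx : ‖x‖ < 1) :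
    Summable fun n : ℕ => ‖x ^ (n ^ 2) * (1 - x ^ (2 * n + 2)) ^ 2‖ := by
  refine ((summable_norm_pow_of_le hx fun n => Nat.le_self_pow two_ne_zero n).mul_left 4
    ).of_nonneg_of_le (fun _ => norm_nonneg _) fun n => ?_
  have h : ‖1 - x ^ (2 * n + 2)‖ ≤ 2 := by
    refine (norm_sub_le _ _).trans ?_
    rw [norm_one, norm_pow]
    linarith [pow_le_one₀ (n := 2 * n + 2) (norm_nonneg x) hx.le]
  rw [norm_mul, norm_pow _ 2, mul_comm 4]
  gcongr
  nlinarith [norm_nonneg (1 - x ^ (2 * n + 2))]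

theorem one_sub_mul_tsum_pow_natAbs_sq [CompleteSpace 𝕜] (hx : ‖x‖ < 1) :
    (1 - x) * ∑' m : ℤ, x ^ (m.natAbs ^ 2) = ∑' n : ℕ, x ^ (n ^ 2) * (1 - x ^ (2 * n + 2)) ^ 2 := by
  have hs {c : ℕ → ℕ} (hc : ∀ n, n ≤ c n) : Summable fun n => x ^ c n :=
    (summable_norm_pow_of_le hx hc).of_norm
  have h₀ : Summable fun n : ℕ => x ^ (n ^ 2) := hs fun n => Nat.le_self_pow two_ne_zero n
  have h₁ : Summable fun n : ℕ => x ^ ((n + 1) ^ 2) := hs fun n => by nlinarith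
  have h₂ : Summable fun n : ℕ => x ^ ((n + 2) ^ 2) := hs fun n => by nlinarith
  have hθ : ∑' m : ℤ, x ^ (m.natAbs ^ 2) = 2 * ∑' n : ℕ, x ^ (n ^ 2) - 1 := by
    have := tsum_nat_add_neg (summable_int_natAbs h₀)
    simp only [Int.natAbs_neg, Int.natAbs_natCast, Int.natAbs_zero] at this
    rw [h₀.tsum_add h₀] at this
    linear_combination -this
  have e₀ : ∑' n : ℕ, x ^ (n ^ 2) = 1 + ∑' n : ℕ, x ^ ((n + 1) ^ 2) := by
    rw [h₀.tsum_eq_zero_add]; norm_num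
  have e₁ : ∑' n : ℕ, x ^ ((n + 1) ^ 2) = x + ∑' n : ℕ, x ^ ((n + 2) ^ 2) := by
    rw [h₁.tsum_eq_zero_add]; norm_num
  have hexpand : (fun n : ℕ => x ^ (n ^ 2) * (1 - x ^ (2 * n + 2)) ^ 2) =
      fun n => x ^ (n ^ 2) - 2 * x * x ^ ((n + 1) ^ 2) + x ^ ((n + 2) ^ 2) := by
    ext n; ring
  rw [hexpand, (h₀.sub (h₁.mul_left _)).tsum_add h₂, h₀.tsum_sub (h₁.mul_left _), tsum_mul_left, hθ]
  linear_combination (1 - 2 * x) * e₀ + e₁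

end Analysis

/-- For `x : ℂ` with `‖x‖ < 1`,
`(1 - x) · ∏_{m=1}^∞ (1 - x^{2m})(1 + x^{2m-1})² = Σ_{n=0}^∞ x^{n²}(1 - x^{2n+2})²`,
where the infinite product is multipliable and the series is absolutely convergent.
(The product over `m ≥ 1` is reindexed by `m ↦ m + 1` with `m : ℕ`.) -/
theorem fermionic_product_eq_telescoping_sum (x : ℂ) (hx : ‖x‖ < 1) :
    Multipliable (fun m : ℕ => (1 - x ^ (2 * m + 2)) * (1 + x ^ (2 * m + 1)) ^ 2) ∧
    Summable (fun n : ℕ => ‖x ^ (n ^ 2) * (1 - x ^ (2 * n + 2)) ^ 2‖) ∧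
    (1 - x) * ∏' m : ℕ, (1 - x ^ (2 * m + 2)) * (1 + x ^ (2 * m + 1)) ^ 2
      = ∑' n : ℕ, x ^ (n ^ 2) * (1 - x ^ (2 * n + 2)) ^ 2 :=
  ⟨multipliable_one_sub_pow_mul_one_add_pow_sq hx, summable_norm_pow_sq_mul_one_sub_pow_sq hx,
    by rw [tprod_one_sub_pow_mul_one_add_pow_sq hx, one_sub_mul_tsum_pow_natAbs_sq hx]⟩
end

section
/- For every complex number x with |x| < 1, one has Σ_{n=0}^∞ x^{n²}(1 - x^{2n+2})² = (1 - x) · Σ_{n ∈ ℤ} x^{n²}, where both series converge absolutely. -/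
lemma aux_summable_shift (x : ℂ) (hx : ‖x‖ < 1) (k : ℕ) :
    Summable (fun n : ℕ => ‖x‖ ^ ((n + k) ^ 2)) := by
  refine (summable_geometric_of_lt_one (norm_nonneg x) hx).of_nonneg_of_le
    (fun n => pow_nonneg (norm_nonneg x) _) (fun n => ?_)
  refine pow_le_pow_of_le_one (norm_nonneg x) hx.le ?_
  calc n ≤ n + k := Nat.le_add_right n k
    _ ≤ (n + k) ^ 2 := Nat.le_self_pow two_ne_zero _

set_option maxHeartbeats 1000000 in
/-- For `x : ℂ` with `‖x‖ < 1`,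
`Σ_{n=0}^∞ x^{n²}(1 - x^{2n+2})² = (1 - x) · Σ_{n ∈ ℤ} x^{n²}`,
where both series converge absolutely. -/
theorem telescoping_sum_eq_theta (x : ℂ) (hx : ‖x‖ < 1) :
    Summable (fun n : ℕ => ‖x ^ (n ^ 2) * (1 - x ^ (2 * n + 2)) ^ 2‖) ∧
    Summable (fun n : ℤ => ‖x ^ (n ^ 2)‖) ∧
    ∑' n : ℕ, x ^ (n ^ 2) * (1 - x ^ (2 * n + 2)) ^ 2
      = (1 - x) * ∑' n : ℤ, x ^ (n ^ 2) := by
  set r := ‖x‖ with hr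
  have hr0 : (0:ℝ) ≤ r := norm_nonneg x
  have hgeom : Summable (fun n : ℕ => r ^ n) := summable_geometric_of_lt_one hr0 hx
  have hnormS : Summable (fun n : ℕ => r ^ (n ^ 2)) := by
    simpa using aux_summable_shift x hx 0
  have hS : Summable (fun n : ℕ => x ^ (n ^ 2)) := by
    refine Summable.of_norm ?_
    simpa [norm_pow] using hnormS
  have h1' : Summable (fun n : ℕ => x ^ ((n + 1) ^ 2)) := by
    refine Summable.of_norm ?_
    simpa [norm_pow] using aux_summable_shift x hx 1
  have h2' : Summable (fun n : ℕ => x ^ ((n + 2) ^ 2)) := by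
    refine Summable.of_norm ?_
    simpa [norm_pow] using aux_summable_shift x hx 2
  have hn1 : Summable (fun n : ℕ => r ^ ((n + 1) ^ 2)) :=
    aux_summable_shift x hx 1
  -- first conjunct
  have c1 : Summable (fun n : ℕ => ‖x ^ (n ^ 2) * (1 - x ^ (2 * n + 2)) ^ 2‖) := by
    refine (hnormS.mul_left 4).of_nonneg_of_le (fun n => norm_nonneg _) (fun n => ?_)
    rw [norm_mul, norm_pow, norm_pow]
    have hb : ‖1 - x ^ (2 * n + 2)‖ ≤ 2 := by
      calc ‖1 - x ^ (2 * n + 2)‖ ≤ ‖(1:ℂ)‖ + ‖x ^ (2 * n + 2)‖ := norm_sub_le _ _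
        _ ≤ 1 + 1 := by
            rw [norm_one, norm_pow]
            gcongr
            exact pow_le_one₀ hr0 hx.le
        _ = 2 := by norm_num
    calc r ^ (n ^ 2) * ‖1 - x ^ (2 * n + 2)‖ ^ 2
        ≤ r ^ (n ^ 2) * 2 ^ 2 := by
          gcongr
      _ = 4 * r ^ (n ^ 2) := by ring
  -- casting facts for ℤ powers
  have key1 : ∀ n : ℕ, x ^ (((n : ℤ)) ^ 2) = x ^ (n ^ 2) := by
    intro n
    rw [show ((n : ℤ)) ^ 2 = ((n ^ 2 : ℕ) : ℤ) by push_cast; ring, zpow_natCast]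
  have key2 : ∀ n : ℕ, x ^ ((-((n : ℤ) + 1)) ^ 2) = x ^ ((n + 1) ^ 2) := by
    intro n
    rw [show (-((n : ℤ) + 1)) ^ 2 = (((n + 1) ^ 2 : ℕ) : ℤ) by push_cast; ring, zpow_natCast]
  -- second conjunct
  have c2 : Summable (fun n : ℤ => ‖x ^ (n ^ 2)‖) := by
    apply Summable.of_nat_of_neg_add_one
    · refine Summable.congr hnormS (fun n => ?_)
      rw [key1 n, norm_pow]
    · refine Summable.congr hn1 (fun n => ?_)
      rw [key2 n, norm_pow]
  refine ⟨c1, c2, ?_⟩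
  -- set up shifted sums
  set S := ∑' n : ℕ, x ^ (n ^ 2) with hSdef
  have e1 : ∑' n : ℕ, x ^ ((n + 1) ^ 2) = S - 1 := by
    have := Summable.tsum_eq_zero_add hS
    rw [hSdef]
    rw [this]
    norm_num
  have e2 : ∑' n : ℕ, x ^ ((n + 2) ^ 2) = S - 1 - x := by
    have := Summable.tsum_eq_zero_add h1'
    have h10 : x ^ ((0 + 1) ^ 2) = x := by norm_num
    rw [show (∑' n : ℕ, x ^ ((n + 1 + 1) ^ 2)) = ∑' n : ℕ, x ^ ((n + 2) ^ 2) by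
      apply tsum_congr; intro n; ring_nf] at this
    rw [← e1, this, h10]
    ring
  have hpt : ∀ n : ℕ, x ^ (n ^ 2) * (1 - x ^ (2 * n + 2)) ^ 2
      = x ^ (n ^ 2) - 2 * x * x ^ ((n + 1) ^ 2) + x ^ ((n + 2) ^ 2) := by
    intro n
    have ha : (n + 1) ^ 2 = n ^ 2 + (2 * n + 1) := by ring
    have hb : (n + 2) ^ 2 = n ^ 2 + (2 * n + 2) + (2 * n + 2) := by ring
    rw [ha, hb, pow_add, pow_add, pow_add, pow_add, pow_add]
    ring
  have LHS : ∑' n : ℕ, x ^ (n ^ 2) * (1 - x ^ (2 * n + 2)) ^ 2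
      = S - 2 * x * (S - 1) + (S - 1 - x) := by
    rw [tsum_congr hpt, Summable.tsum_add (hS.sub (h1'.mul_left (2 * x))) h2',
      Summable.tsum_sub hS (h1'.mul_left (2 * x)), tsum_mul_left, e1, e2]
  have RHSz : ∑' n : ℤ, x ^ (n ^ 2) = S + (S - 1) := by
    rw [tsum_of_nat_of_neg_add_one
      (Summable.congr hS (fun n => (key1 n).symm))
      (Summable.congr h1' (fun n => (key2 n).symm))]
    rw [tsum_congr key1, tsum_congr key2, e1]
  rw [LHS, RHSz]
  ring
end

section
/- Let ℓ, h ∈ ℂ satisfy ℓ·h = (3/4)(ℓ-1)². Let ψ : ℝ → ℂ be twice differentiable on the open interval (0,1) and suppose that for all z ∈ (0,1): z(1-z)ψ''(z) + ((4h+2-ℓ)(1-z) - ℓ)ψ'(z) + (1/(z(1-z)))·((2h(2h+1) - 3ℓh)(1-z)² - ℓh)·ψ(z) = 0. Define f : (0,1) → ℂ by f(z) = (1-z)^{-(ℓ-1)/2} · z^{2h} · ψ(z). Then f is twice differentiable on (0,1) and satisfies the hypergeometric differential equation z(1-z)f''(z) + (γ - (α+β+1)z)f'(z) - αβ·f(z)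 = 0, where α = 1-ℓ, β = ℓ-1, and γ = 2-2ℓ. -/
open Complex Set

private lemma bpz_rel (x c : ℂ) (hx : x ≠ 0) : x ^ c = x ^ (c - 1) * x := by
  conv_lhs => rw [show c = c - 1 + 1 by ring]
  rw [Complex.cpow_add _ _ hx, Complex.cpow_one]

private lemma bpz_key (ℓ h z a b A A1 A2 B B1 B2 ψ0 ψ1 ψ2 : ℂ)
    (ha : a = -(ℓ - 1) / 2) (hb : b = 2 * h)
    (hA : A = A1 * (1 - z)) (hA1 : A1 = A2 * (1 - z))
    (hB : B = B1 * z) (hB1 : B1 = B2 * z)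
    (hlh : ℓ * h = (3 / 4) * (ℓ - 1) ^ 2)
    (h0 : z ^ 2 * (1 - z) ^ 2 * ψ2 + z * (1 - z) * ((4 * h + 2 - ℓ) * (1 - z) - ℓ) * ψ1
      + ((2 * h * (2 * h + 1) - 3 * ℓ * h) * (1 - z) ^ 2 - ℓ * h) * ψ0 = 0) :
    z * (1 - z) * (a * (a - 1) * A2 * B * ψ0 - 2 * a * b * A1 * B1 * ψ0
        + b * (b - 1) * A * B2 * ψ0 - 2 * a * A1 * B * ψ1 + 2 * b * A * B1 * ψ1 + A * B * ψ2)
      + ((2 - 2 * ℓ) - ((1 - ℓ) + (ℓ - 1) + 1) * z)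
          * (-a * A1 * B * ψ0 + b * A * B1 * ψ0 + A * B * ψ1)
      - (1 - ℓ) * (ℓ - 1) * (A * B * ψ0) = 0 := by
  subst ha hb hA hB hA1 hB1
  linear_combination (A2 * (1 - z)) * (B2 * z) * h0
    + (A2 * (1 - z)) * (B2 * z) * z ^ 2 * ψ0 * hlh


/-- Corollary B.2: if `ψ` satisfies the BPZ-type ODE on `(0,1)` and
`ℓ·h = (3/4)(ℓ-1)²`, then `f(z) = (1-z)^{-(ℓ-1)/2} · z^{2h} · ψ(z)` is twice
differentiable on `(0,1)` and satisfies the hypergeometric differential equation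
with `α = 1-ℓ`, `β = ℓ-1`, `γ = 2-2ℓ`. Powers of positive reals with complex
exponents are principal powers (complex `cpow` of a positive real base). -/
theorem bpz_to_hypergeometric
    (ℓ h : ℂ) (hlh : ℓ * h = (3 / 4) * (ℓ - 1) ^ 2)
    (ψ : ℝ → ℂ)
    (hψ1 : ∀ z ∈ Set.Ioo (0 : ℝ) 1, DifferentiableAt ℝ ψ z)
    (hψ2 : ∀ z ∈ Set.Ioo (0 : ℝ) 1, DifferentiableAt ℝ (deriv ψ) z)
    (hode : ∀ z ∈ Set.Ioo (0 : ℝ) 1,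
      (z : ℂ) * (1 - (z : ℂ)) * deriv (deriv ψ) z
        + ((4 * h + 2 - ℓ) * (1 - (z : ℂ)) - ℓ) * deriv ψ z
        + (1 / ((z : ℂ) * (1 - (z : ℂ))))
            * ((2 * h * (2 * h + 1) - 3 * ℓ * h) * (1 - (z : ℂ)) ^ 2 - ℓ * h) * ψ z = 0)
    (f : ℝ → ℂ)
    (hf : ∀ z : ℝ, f z = ((1 - z : ℝ) : ℂ) ^ (-(ℓ - 1) / 2) * ((z : ℂ) ^ (2 * h)) * ψ z) :
    (∀ z ∈ Set.Ioo (0 : ℝ) 1, DifferentiableAt ℝ f z) ∧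
    (∀ z ∈ Set.Ioo (0 : ℝ) 1, DifferentiableAt ℝ (deriv f) z) ∧
    ∀ z ∈ Set.Ioo (0 : ℝ) 1,
      (z : ℂ) * (1 - (z : ℂ)) * deriv (deriv f) z
        + ((2 - 2 * ℓ) - ((1 - ℓ) + (ℓ - 1) + 1) * (z : ℂ)) * deriv f z
        - (1 - ℓ) * (ℓ - 1) * f z = 0 := by
  -- derivatives of the elementary power factors
  have hgA : ∀ (c : ℂ), ∀ z ∈ Set.Ioo (0 : ℝ) 1,
      HasDerivAt (fun t : ℝ => (1 - (t : ℂ)) ^ c) (c * (1 - (z : ℂ)) ^ (c - 1) * (-1)) z := by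
    intro c z hz
    have hbase : (1 : ℂ) - (z : ℂ) = ((1 - z : ℝ) : ℂ) := by push_cast; ring
    have h1 : HasDerivAt (fun w : ℂ => (1 - w) ^ c) (c * (1 - (z : ℂ)) ^ (c - 1) * (-1)) (z : ℂ) := by
      apply HasDerivAt.cpow_const
      · simpa using (hasDerivAt_id ((z : ℝ) : ℂ)).const_sub 1
      · rw [hbase]
        exact Complex.ofReal_mem_slitPlane.2 (by linarith [hz.2])
    exact h1.comp_ofReal
  have hgB : ∀ (c : ℂ), ∀ z ∈ Set.Ioo (0 : ℝ) 1,
      HasDerivAt (fun t : ℝ => ((t : ℂ)) ^ c) (c * (z : ℂ) ^ (c - 1) * 1) z := by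
    intro c z hz
    have h1 : HasDerivAt (fun w : ℂ => w ^ c) (c * (z : ℂ) ^ (c - 1) * 1) (z : ℂ) := by
      apply HasDerivAt.cpow_const (hasDerivAt_id ((z : ℝ) : ℂ))
      exact Complex.ofReal_mem_slitPlane.2 hz.1
    exact h1.comp_ofReal
  have hfeq : ∀ t : ℝ, f t
      = (1 - (t : ℂ)) ^ (-(ℓ - 1) / 2) * (((t : ℂ)) ^ (2 * h) * ψ t) := by
    intro t
    rw [hf t]
    have hbase : ((1 - t : ℝ) : ℂ) = 1 - (t : ℂ) := by push_cast; ring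
    rw [hbase]; ring
  -- first derivative
  have hDf : ∀ z ∈ Set.Ioo (0 : ℝ) 1,
      HasDerivAt f
        ((-(ℓ - 1) / 2) * (1 - (z : ℂ)) ^ (-(ℓ - 1) / 2 - 1) * (-1) * ((z : ℂ) ^ (2 * h) * ψ z)
          + (1 - (z : ℂ)) ^ (-(ℓ - 1) / 2)
            * ((2 * h) * (z : ℂ) ^ (2 * h - 1) * 1 * ψ z + (z : ℂ) ^ (2 * h) * deriv ψ z)) z := by
    intro z hz
    exact ((hgA (-(ℓ - 1) / 2) z hz).mul
      ((hgB (2 * h) z hz).mul (hψ1 z hz).hasDerivAt)).congr_of_eventuallyEq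
      (Filter.Eventually.of_forall hfeq)
  -- function giving the first derivative on (0,1)
  set V1 : ℝ → ℂ := fun t =>
    (-(ℓ - 1) / 2) * (1 - (t : ℂ)) ^ (-(ℓ - 1) / 2 - 1) * (-1) * ((t : ℂ) ^ (2 * h) * ψ t)
      + (1 - (t : ℂ)) ^ (-(ℓ - 1) / 2)
        * ((2 * h) * (t : ℂ) ^ (2 * h - 1) * 1 * ψ t + (t : ℂ) ^ (2 * h) * deriv ψ t) with hV1
  have hderiv1 : ∀ z ∈ Set.Ioo (0 : ℝ) 1, deriv f z = V1 z := fun z hz => (hDf z hz).deriv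
  -- second derivative: V1 is differentiable with explicit derivative
  have hDV1 : ∀ z ∈ Set.Ioo (0 : ℝ) 1,
      HasDerivAt V1
        (((-(ℓ - 1) / 2) * ((-(ℓ - 1) / 2 - 1) * (1 - (z : ℂ)) ^ (-(ℓ - 1) / 2 - 1 - 1) * (-1)) * (-1))
            * ((z : ℂ) ^ (2 * h) * ψ z)
          + (-(ℓ - 1) / 2) * (1 - (z : ℂ)) ^ (-(ℓ - 1) / 2 - 1) * (-1)
            * ((2 * h) * (z : ℂ) ^ (2 * h - 1) * 1 * ψ z + (z : ℂ) ^ (2 * h) * deriv ψ z)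
          + (((-(ℓ - 1) / 2) * (1 - (z : ℂ)) ^ (-(ℓ - 1) / 2 - 1) * (-1))
              * ((2 * h) * (z : ℂ) ^ (2 * h - 1) * 1 * ψ z + (z : ℂ) ^ (2 * h) * deriv ψ z)
            + (1 - (z : ℂ)) ^ (-(ℓ - 1) / 2)
              * (((2 * h) * ((2 * h - 1) * (z : ℂ) ^ (2 * h - 1 - 1) * 1) * 1) * ψ z
                  + (2 * h) * (z : ℂ) ^ (2 * h - 1) * 1 * deriv ψ z
                + ((2 * h) * (z : ℂ) ^ (2 * h - 1) * 1 * deriv ψ z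
                    + (z : ℂ) ^ (2 * h) * deriv (deriv ψ) z)))) z := by
    intro z hz
    exact ((((hgA (-(ℓ - 1) / 2 - 1) z hz).const_mul (-(ℓ - 1) / 2)).mul_const (-1)).mul
        ((hgB (2 * h) z hz).mul (hψ1 z hz).hasDerivAt)).add
      ((hgA (-(ℓ - 1) / 2) z hz).mul
        (((((hgB (2 * h - 1) z hz).const_mul (2 * h)).mul_const 1).mul (hψ1 z hz).hasDerivAt).add
          ((hgB (2 * h) z hz).mul (hψ2 z hz).hasDerivAt)))
  refine ⟨fun z hz => (hDf z hz).differentiableAt, ?_, ?_⟩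
  · intro z hz
    have heq : deriv f =ᶠ[nhds z] V1 :=
      Filter.eventuallyEq_of_mem (isOpen_Ioo.mem_nhds hz) hderiv1
    exact (heq.differentiableAt_iff).mpr (hDV1 z hz).differentiableAt
  · intro z hz
    have hzc : (z : ℂ) ≠ 0 := Complex.ofReal_ne_zero.mpr (ne_of_gt hz.1)
    have hbase : (1 : ℂ) - (z : ℂ) = ((1 - z : ℝ) : ℂ) := by push_cast; ring
    have hz1c : (1 : ℂ) - (z : ℂ) ≠ 0 := by
      rw [hbase]; exact Complex.ofReal_ne_zero.mpr (by linarith [hz.2])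
    have heq : deriv f =ᶠ[nhds z] V1 :=
      Filter.eventuallyEq_of_mem (isOpen_Ioo.mem_nhds hz) hderiv1
    have hd2 : deriv (deriv f) z = _ := (heq.deriv_eq).trans (hDV1 z hz).deriv
    -- cleared BPZ equation
    have h0 : (z : ℂ) ^ 2 * (1 - (z : ℂ)) ^ 2 * deriv (deriv ψ) z
        + (z : ℂ) * (1 - (z : ℂ)) * ((4 * h + 2 - ℓ) * (1 - (z : ℂ)) - ℓ) * deriv ψ z
        + ((2 * h * (2 * h + 1) - 3 * ℓ * h) * (1 - (z : ℂ)) ^ 2 - ℓ * h) * ψ z = 0 := by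
      have h1 : ((z : ℂ) * (1 - (z : ℂ))) * ((1 / ((z : ℂ) * (1 - (z : ℂ))))
          * ((2 * h * (2 * h + 1) - 3 * ℓ * h) * (1 - (z : ℂ)) ^ 2 - ℓ * h) * ψ z)
          = ((2 * h * (2 * h + 1) - 3 * ℓ * h) * (1 - (z : ℂ)) ^ 2 - ℓ * h) * ψ z := by
        field_simp
      linear_combination ((z : ℂ) * (1 - (z : ℂ))) * (hode z hz) - h1
    rw [hd2, hderiv1 z hz, hfeq z, hV1]
    linear_combination bpz_key ℓ h (z : ℂ) (-(ℓ - 1) / 2) (2 * h)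
      ((1 - (z : ℂ)) ^ (-(ℓ - 1) / 2)) ((1 - (z : ℂ)) ^ (-(ℓ - 1) / 2 - 1))
      ((1 - (z : ℂ)) ^ (-(ℓ - 1) / 2 - 1 - 1))
      ((z : ℂ) ^ (2 * h)) ((z : ℂ) ^ (2 * h - 1)) ((z : ℂ) ^ (2 * h - 1 - 1))
      (ψ z) (deriv ψ z) (deriv (deriv ψ) z) rfl rfl
      (bpz_rel _ _ hz1c) (bpz_rel _ _ hz1c) (bpz_rel _ _ hzc) (bpz_rel _ _ hzc) hlh h0
end

section
/- Let h, ℓ ∈ ℂ and let g : ℝ → ℂ be twice differentiable on (0,∞). For x₀, x₂ > 0 set Ψ(x₀, x₂) = x₂^{-2h} · g(x₀/x₂). Suppose that for all x₀, x₂ > 0 the partial differential equation ∂²Ψ/∂x₀² = ℓ(x₀^{-1} - (x₂+x₀)^{-1})·∂Ψ/∂x₂ - ℓ·x₀^{-1}·∂Ψ/∂x₀ + ℓh(x₀^{-2} + (x₂+x₀)^{-2})·Ψ holds, where ∂Ψ/∂x₀ and ∂²Ψ/∂x₀² denote the first and second derivatives of the function x₀ ↦ Ψ(x₀,x₂) and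 ∂Ψ/∂x₂ denotes the derivative of x₂ ↦ Ψ(x₀,x₂). Then the function ψ : (0,1) → ℂ defined by ψ(z) = z^{-2h} · g((1-z)/z) = Ψ(1-z, z) is twice differentiable and satisfies, for all z ∈ (0,1): z(1-z)ψ''(z) + ((4h+2-ℓ)(1-z) - ℓ)ψ'(z) + (1/(z(1-z)))·((2h(2h+1) - 3ℓh)(1-z)² - ℓh)·ψ(z) = 0. -/
/-!
With `u = (1 - z) / z`, both `ψ(z) = z^{-2h} g(u)` and the partial derivatives of `Ψ` at
`(1 - z, z)` are `z^{-2h}` times linear combinations of `g(u)`, `g'(u)`, `g''(u)` with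
coefficients rational in `z`. Substituting them, the left side of the ODE is exactly
`(1 - z) / z` times the difference of the two sides of the PDE at `(x₀, x₂) = (1 - z, z)`.
-/

open Set

theorem hasDerivAt_ofReal_cpow_const_of_pos (c : ℂ) {x : ℝ} (hx : 0 < x) :
    HasDerivAt (fun t : ℝ => (t : ℂ) ^ c) (c * (x : ℂ) ^ c / x) x := by
  have hx' : (x : ℂ) ≠ 0 := by exact_mod_cast hx.ne'
  have := ((hasDerivAt_id (x : ℂ)).cpow_const (c := c)
    (Complex.ofReal_mem_slitPlane.2 hx)).comp_ofReal
  simpa [Complex.cpow_sub _ _ hx', mul_div_assoc] using this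

theorem HasDerivAt.ofReal_cpow_mul (c : ℂ) {G : ℝ → ℂ} {G' : ℂ} {t : ℝ} (hG : HasDerivAt G G' t)
    (ht : 0 < t) :
    HasDerivAt (fun s : ℝ => (s : ℂ) ^ c * G s) ((t : ℂ) ^ c * (c / t * G t + G')) t := by
  refine ((hasDerivAt_ofReal_cpow_const_of_pos c ht).fun_mul hG).congr_deriv ?_
  ring

theorem DifferentiableAt.hasDerivAt_comp_real {f : ℝ → ℂ} {φ : ℝ → ℝ} {φ' t : ℝ}
    (hf : DifferentiableAt ℝ f (φ t)) (hφ : HasDerivAt φ φ' t) :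
    HasDerivAt (fun s => f (φ s)) (φ' * deriv f (φ t)) t := by
  have := hf.hasDerivAt.scomp t hφ
  rwa [Complex.real_smul] at this

theorem deriv_const_mul_comp_div (K : ℂ) (f : ℝ → ℂ) (y : ℝ) :
    deriv (fun x => K * f (x / y)) = fun x => K * y⁻¹ * deriv f (x / y) := by
  funext x
  simp only [deriv_const_mul_field, div_eq_inv_mul]
  rw [show (fun x => f (y⁻¹ * x)) = (f <| y⁻¹ * ·) from rfl, deriv_comp_mul_left,
    Complex.real_smul]
  push_cast
  ring

theorem hasDerivAt_deriv_ofReal_cpow_mul (c : ℂ) {U : Set ℝ} (hU : IsOpen U) (hU0 : U ⊆ Ioi 0)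
    {G G₁ G₂ : ℝ → ℂ} (hG : ∀ t ∈ U, HasDerivAt G (G₁ t) t)
    (hG₁ : ∀ t ∈ U, HasDerivAt G₁ (G₂ t) t) {t : ℝ} (ht : t ∈ U) :
    HasDerivAt (deriv fun s : ℝ => (s : ℂ) ^ c * G s)
      ((t : ℂ) ^ c * (c * (c - 1) / t ^ 2 * G t + 2 * c / t * G₁ t + G₂ t)) t := by
  have ht0 : (t : ℂ) ≠ 0 := by exact_mod_cast (hU0 ht).ne'
  have hderiv : (deriv fun s : ℝ => (s : ℂ) ^ c * G s) =ᶠ[nhds t]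
      fun s => (s : ℂ) ^ c * (c * (s : ℂ)⁻¹ * G s + G₁ s) :=
    Filter.eventually_of_mem (hU.mem_nhds ht) fun s hs => by
      rw [((hG s hs).ofReal_cpow_mul c (hU0 hs)).deriv, div_eq_mul_inv]
  have hinner := (((hasDerivAt_inv ht0).comp_ofReal.const_mul c).fun_mul (hG t ht)).fun_add
    (hG₁ t ht)
  refine ((hinner.ofReal_cpow_mul c (hU0 ht)).congr_of_eventuallyEq hderiv).congr_deriv ?_
  field_simp
  ring

theorem hasDerivAt_comp_one_sub_div {f : ℝ → ℂ} {t : ℝ} (ht : t ≠ 0)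
    (hf : DifferentiableAt ℝ f ((1 - t) / t)) :
    HasDerivAt (fun s => f ((1 - s) / s)) (-((t : ℂ) ^ 2)⁻¹ * deriv f ((1 - t) / t)) t := by
  have hφ : HasDerivAt (fun s : ℝ => (1 - s) / s) (-(t ^ 2)⁻¹) t := by
    refine (((hasDerivAt_id t).const_sub 1).div (hasDerivAt_id t) ht).congr_deriv ?_
    simp only [id]
    field_simp
    ring
  simpa using hf.hasDerivAt_comp_real (φ := fun s => (1 - s) / s) hφ

theorem hasDerivAt_neg_inv_sq_mul_comp_one_sub_div {f : ℝ → ℂ} {t : ℝ} (ht : t ≠ 0)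
    (hf : DifferentiableAt ℝ f ((1 - t) / t)) :
    HasDerivAt (fun s : ℝ => -((s : ℂ) ^ 2)⁻¹ * f ((1 - s) / s))
      (2 / (t : ℂ) ^ 3 * f ((1 - t) / t) + ((t : ℂ) ^ 4)⁻¹ * deriv f ((1 - t) / t)) t := by
  have ht0 : (t : ℂ) ≠ 0 := by exact_mod_cast ht
  have hinv : HasDerivAt (fun s : ℝ => -((s : ℂ) ^ 2)⁻¹) (2 / (t : ℂ) ^ 3) t := by
    refine ((hasDerivAt_pow 2 (t : ℂ)).fun_inv (pow_ne_zero 2 ht0)).neg.comp_ofReal.congr_deriv ?_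
    field_simp
    ring
  refine (hinv.fun_mul (hasDerivAt_comp_one_sub_div ht hf)).congr_deriv ?_
  ring

theorem hasDerivAt_ofReal_cpow_mul_comp_const_div (c : ℂ) {f : ℝ → ℂ} {x y : ℝ} (hy : 0 < y)
    (hf : DifferentiableAt ℝ f (x / y)) :
    HasDerivAt (fun v : ℝ => (v : ℂ) ^ c * f (x / v))
      ((y : ℂ) ^ c * (c / y * f (x / y) - x / y ^ 2 * deriv f (x / y))) y := by
  have hφ : HasDerivAt (fun v : ℝ => x / v) (-(x / y ^ 2)) y := by
    simpa [div_eq_mul_inv] using (hasDerivAt_inv hy.ne').const_mul x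
  refine ((hf.hasDerivAt_comp_real hφ).ofReal_cpow_mul c hy).congr_deriv ?_
  push_cast
  ring

/-- Theorem B.1 (change of variables): if `Ψ(x₀,x₂) = x₂^{-2h}·g(x₀/x₂)` satisfies
the PDE of Lemma B.1 for all `x₀, x₂ > 0`, then `ψ(z) = Ψ(1-z, z)` is twice
differentiable on `(0,1)` and satisfies the BPZ-type ODE. Powers of positive reals
with complex exponents are principal powers (complex `cpow` of a positive real base). -/
theorem pde_to_bpz_ode
    (h ℓ : ℂ) (g : ℝ → ℂ)
    (hg1 : ∀ u ∈ Set.Ioi (0 : ℝ), DifferentiableAt ℝ g u)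
    (hg2 : ∀ u ∈ Set.Ioi (0 : ℝ), DifferentiableAt ℝ (deriv g) u)
    (Ψ : ℝ → ℝ → ℂ)
    (hΨ : ∀ x₀ x₂ : ℝ, Ψ x₀ x₂ = ((x₂ : ℂ) ^ (-(2 * h))) * g (x₀ / x₂))
    (hpde : ∀ x₀ ∈ Set.Ioi (0 : ℝ), ∀ x₂ ∈ Set.Ioi (0 : ℝ),
      deriv (deriv (fun u : ℝ => Ψ u x₂)) x₀ =
        ℓ * ((x₀ : ℂ)⁻¹ - ((x₂ : ℂ) + (x₀ : ℂ))⁻¹) * deriv (fun v : ℝ => Ψ x₀ v) x₂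
          - ℓ * (x₀ : ℂ)⁻¹ * deriv (fun u : ℝ => Ψ u x₂) x₀
          + ℓ * h * (((x₀ : ℂ) ^ 2)⁻¹ + (((x₂ : ℂ) + (x₀ : ℂ)) ^ 2)⁻¹) * Ψ x₀ x₂)
    (ψ : ℝ → ℂ)
    (hψ : ∀ z : ℝ, ψ z = Ψ (1 - z) z) :
    (∀ z ∈ Set.Ioo (0 : ℝ) 1, DifferentiableAt ℝ ψ z) ∧
    (∀ z ∈ Set.Ioo (0 : ℝ) 1, DifferentiableAt ℝ (deriv ψ) z) ∧
    ∀ z ∈ Set.Ioo (0 : ℝ) 1,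
      (z : ℂ) * (1 - (z : ℂ)) * deriv (deriv ψ) z
        + ((4 * h + 2 - ℓ) * (1 - (z : ℂ)) - ℓ) * deriv ψ z
        + (1 / ((z : ℂ) * (1 - (z : ℂ))))
            * ((2 * h * (2 * h + 1) - 3 * ℓ * h) * (1 - (z : ℂ)) ^ 2 - ℓ * h) * ψ z = 0 := by
  set c := -(2 * h)
  have hψ_eq : ψ = fun z : ℝ => (z : ℂ) ^ c * g ((1 - z) / z) := funext fun z => by rw [hψ, hΨ]
  have hu : ∀ z ∈ Ioo (0 : ℝ) 1, (1 - z) / z ∈ Ioi (0 : ℝ) :=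
    fun z hz => div_pos (sub_pos.2 hz.2) hz.1
  have hG : ∀ z ∈ Ioo (0 : ℝ) 1, HasDerivAt (fun s => g ((1 - s) / s))
      (-((z : ℂ) ^ 2)⁻¹ * deriv g ((1 - z) / z)) z :=
    fun z hz => hasDerivAt_comp_one_sub_div hz.1.ne' (hg1 _ (hu z hz))
  have hG₁ : ∀ z ∈ Ioo (0 : ℝ) 1, HasDerivAt (fun s : ℝ => -((s : ℂ) ^ 2)⁻¹ * deriv g ((1 - s) / s))
      (2 / (z : ℂ) ^ 3 * deriv g ((1 - z) / z)
        + ((z : ℂ) ^ 4)⁻¹ * deriv (deriv g) ((1 - z) / z)) z :=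
    fun z hz => hasDerivAt_neg_inv_sq_mul_comp_one_sub_div hz.1.ne' (hg2 _ (hu z hz))
  have hψ' : ∀ z ∈ Ioo (0 : ℝ) 1, HasDerivAt ψ
      ((z : ℂ) ^ c * (c / z * g ((1 - z) / z) + -((z : ℂ) ^ 2)⁻¹ * deriv g ((1 - z) / z))) z :=
    fun z hz => hψ_eq ▸ (hG z hz).ofReal_cpow_mul c hz.1
  have hψ'' : ∀ z ∈ Ioo (0 : ℝ) 1, HasDerivAt (deriv ψ) _ z := fun z hz =>
    hψ_eq ▸ hasDerivAt_deriv_ofReal_cpow_mul c isOpen_Ioo (fun z hz => hz.1) hG hG₁ hz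
  refine ⟨fun z hz => (hψ' z hz).differentiableAt, fun z hz => (hψ'' z hz).differentiableAt,
    fun z hz => ?_⟩
  have hpde_z := hpde (1 - z) (sub_pos.2 hz.2) z hz.1
  simp only [hΨ, deriv_const_mul_comp_div] at hpde_z
  rw [(hasDerivAt_ofReal_cpow_mul_comp_const_div c hz.1 (hg1 _ (hu z hz))).deriv] at hpde_z
  rw [(hψ' z hz).deriv, (hψ'' z hz).deriv, hψ_eq]
  push_cast at hpde_z ⊢
  have hz0 : (z : ℂ) ≠ 0 := by exact_mod_cast hz.1.ne'
  have hz1 : 1 - (z : ℂ) ≠ 0 := by exact_mod_cast (sub_pos.2 hz.2).ne'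
  linear_combination (norm := (field_simp; ring)) (1 - (z : ℂ)) / z * hpde_z
end

section
/- Let t be a nonzero complex number, let r, s be integers, and set h := h^{ns}_{2,2}(t) = 3(t-1)²/(8t). Then for every complex number x: (x - h^{ns}_{r,s}(t))² - (2h/3)·(x + h^{ns}_{r,s}(t) + h/2) = (x - h^{ns}_{r+1,s+1}(t))·(x - h^{ns}_{r-1,s-1}(t)). -/
/-- The `N=1` super Virasoro conformal weight
`h^{ns}_{r,s}(t) = ((r²-1)/8)·t - (rs-1)/4 + ((s²-1)/8)·t⁻¹`. -/
noncomputable def hns (t : ℂ) (r s : ℤ) : ℂ :=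
  ((r : ℂ) ^ 2 - 1) / 8 * t - ((r : ℂ) * (s : ℂ) - 1) / 4 + ((s : ℂ) ^ 2 - 1) / 8 * t⁻¹

/-- Factorization `f_{2,2}(x, h^{ns}_{r,s}) = (x - h^{ns}_{r+1,s+1})(x - h^{ns}_{r-1,s-1})`
of the Zhu bimodule polynomial `f_{2,2}(x,y) = (x-y)² - (2h/3)(x+y+h/2)`,
where `h = h^{ns}_{2,2}(t) = 3(t-1)²/(8t)`. -/
theorem f22_factorization (t : ℂ) (ht : t ≠ 0) (r s : ℤ)
    (h : ℂ) (hh : h = 3 * (t - 1) ^ 2 / (8 * t)) :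
    ∀ x : ℂ,
      (x - hns t r s) ^ 2 - (2 * h / 3) * (x + hns t r s + h / 2)
        = (x - hns t (r + 1) (s + 1)) * (x - hns t (r - 1) (s - 1)) := by
  intro x
  have hu : t * t⁻¹ = 1 := mul_inv_cancel₀ ht
  have hh' : h = 3 * (t - 1) ^ 2 * t⁻¹ / 8 := by
    rw [hh]; simp only [div_eq_mul_inv, mul_inv]; ring
  rw [hh']
  simp only [hns]
  push_cast
  set u := t⁻¹ with hud
  clear_value u
  linear_combination ((-1/16 : ℂ) + (-1/16)*(s:ℂ)^2 + (-1/16)*(r:ℂ)^2 + (1/2)*x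
    + (1/8)*u + (1/16)*u*(s:ℂ)^2 + (1/16)*t + (1/16)*t*(r:ℂ)*(s:ℂ) + (1/16)*t*(r:ℂ)^2
    + (-1/4)*t*x + (-1/4)*t*u + (-1/32)*t*u*(s:ℂ)^2 + (-1/64)*t^2 + (-1/32)*t^2*(r:ℂ)^2
    + (3/16)*t^2*u + (-3/64)*t^3*u) * hu
end

section
/- Let t be a nonzero complex number, let r, s be integers, and set h := h^{ns}_{2,2}(t) = 3(t-1)²/(8t). Then for every complex number x: (x - h^{ns}_{r,s}(t))² - (2h/3 + 1)·(x + h^{ns}_{r,s}(t) + h/2 - 1/4) = (x - h^{ns}_{r+1,s-1}(t))·(x - h^{ns}_{r-1,s+1}(t)). -/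
/-! By Vieta it suffices that `h^{ns}_{r+1,s-1}` and `h^{ns}_{r-1,s+1}` have sum
`2 h^{ns}_{r,s} + (2h/3 + 1)` and product `h^{ns}_{r,s}² - (2h/3 + 1)(h^{ns}_{r,s} + h/2 - 1/4)`,
both identities of Laurent polynomials in `t`. -/

lemma hns_two_two {t : ℂ} (ht : t ≠ 0) : hns t 2 2 = 3 * (t - 1) ^ 2 / (8 * t) := by
  simp only [hns]
  field_simp
  ring

lemma hns_shift_add_hns_shift (t : ℂ) (r s : ℤ) :
    hns t (r + 1) (s - 1) + hns t (r - 1) (s + 1) = 2 * hns t r s + (2 * hns t 2 2 / 3 + 1) := by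
  simp only [hns]
  push_cast
  ring

lemma hns_shift_mul_hns_shift {t : ℂ} (ht : t ≠ 0) (r s : ℤ) :
    hns t (r + 1) (s - 1) * hns t (r - 1) (s + 1) =
      hns t r s ^ 2 - (2 * hns t 2 2 / 3 + 1) * (hns t r s + hns t 2 2 / 2 - 1 / 4) := by
  simp only [hns]
  push_cast
  field_simp
  ring

/-- Factorization `g_{2,2}(x, h^{ns}_{r,s}) = (x - h^{ns}_{r+1,s-1})(x - h^{ns}_{r-1,s+1})`
of the Zhu bimodule polynomial `g_{2,2}(x,y) = (x-y)² - (2h/3+1)(x+y+h/2-1/4)`,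
where `h = h^{ns}_{2,2}(t) = 3(t-1)²/(8t)`. -/
theorem g22_factorization (t : ℂ) (ht : t ≠ 0) (r s : ℤ)
    (h : ℂ) (hh : h = 3 * (t - 1) ^ 2 / (8 * t)) :
    ∀ x : ℂ,
      (x - hns t r s) ^ 2 - (2 * h / 3 + 1) * (x + hns t r s + h / 2 - 1 / 4)
        = (x - hns t (r + 1) (s - 1)) * (x - hns t (r - 1) (s + 1)) := by
  intro x
  rw [hh, ← hns_two_two ht]
  linear_combination x * hns_shift_add_hns_shift t r s - hns_shift_mul_hns_shift ht r s
end

section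
/- Let m ≥ 1 and n ≥ 2m be integers. Then, as the complex variable t tends to 2m+1 within ℂ \ {2m+1}, the quotient ((1+t)/2)_n · ((1-t)/2)_n / ((2-t)_n · n!) tends to -((-1)^m/2) · ((3m)!·(m-1)!)/((2m-1)!·(2m)!) · ((3m+1)_{n-2m} · (m)_{n-2m})/((2m+1)_{n-2m} · (n-2m)!). -/
/-!
At `t = 2m+1` the argument `(1-t)/2` hits the root `-m` of `(x)ₙ`, and `2-t` hits the root
`-(2m-1)`; both are simple, vanishing like `(2m+1-t)/2` and `2m+1-t`. Splitting off these
linear factors, `(x)ₙ = (x+j) · (x)ⱼ · (x+j+1)ₙ₋ⱼ₋₁`, cancels the singularity and leaves a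
function continuous at `2m+1`. Its value there follows from `(-j)ⱼ = (-1)ʲ j!` and
`r! · (r+1)ₖ = (r+k)!`.
-/

open Filter Polynomial

noncomputable def ascPochhammerCofactor (R : Type*) [Semiring R] (n j : ℕ) : R[X] :=
  ascPochhammer R j * (ascPochhammer R (n - j - 1)).comp (X + (j + 1 : R[X]))

section Cofactor

variable {R : Type*} {n j : ℕ}

theorem ascPochhammer_eq_X_add_mul_cofactor [CommSemiring R] (h : j < n) :
    ascPochhammer R n = (X + (j : R[X])) * ascPochhammerCofactor R n j := by
  obtain ⟨k, rfl⟩ : ∃ k, n = j + (k + 1) := ⟨n - j - 1, by omega⟩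
  rw [← ascPochhammer_mul, ascPochhammer_succ_left, ascPochhammerCofactor,
    show j + (k + 1) - j - 1 = k by omega, mul_comp, X_comp, comp_assoc, add_comp, X_comp,
    one_comp]
  ring_nf

theorem ascPochhammer_eval_eq_mul_cofactor [CommSemiring R] (h : j < n) (x : R) :
    (ascPochhammer R n).eval x = (x + j) * (ascPochhammerCofactor R n j).eval x := by
  rw [ascPochhammer_eq_X_add_mul_cofactor h, eval_mul, eval_add, eval_X, eval_natCast]

theorem ascPochhammerCofactor_eval_neg [CommRing R] (n j : ℕ) :
    (ascPochhammerCofactor R n j).eval (-(j : R)) =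
      (-1) ^ j * j.factorial * (n - j - 1).factorial := by
  rw [ascPochhammerCofactor, eval_mul, eval_comp, ascPochhammer_eval_neg_eq_descPochhammer,
    descPochhammer_eval_eq_descFactorial, Nat.descFactorial_self]
  simp

end Cofactor

theorem ascPochhammer_eval_natCast_add_one {K : Type*} [Field K] [CharZero K] (r k : ℕ) :
    (ascPochhammer K k).eval ((r : K) + 1) = (r + k).factorial / r.factorial := by
  rw [eq_div_iff (by exact_mod_cast r.factorial_ne_zero), mul_comm]
  exact_mod_cast factorial_mul_ascPochhammer K r k

noncomputable def regularizedQuotient (m n : ℕ) (t : ℂ) : ℂ :=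
  (ascPochhammer ℂ n).eval ((1 + t) / 2) * (ascPochhammerCofactor ℂ n m).eval ((1 - t) / 2)
    / (2 * (ascPochhammerCofactor ℂ n (2 * m - 1)).eval (2 - t) * n.factorial)

section RegularizedQuotient

variable {m n : ℕ}

theorem two_sub_two_mul_add_one (hm : 1 ≤ m) :
    (2 : ℂ) - (2 * m + 1) = -((2 * m - 1 : ℕ) : ℂ) := by
  push_cast [Nat.cast_sub (by omega : 1 ≤ 2 * m)]
  ring

theorem quotient_eq_regularizedQuotient (hm : 1 ≤ m) (hn : 2 * m ≤ n) {t : ℂ}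
    (ht : t ≠ 2 * m + 1) :
    (ascPochhammer ℂ n).eval ((1 + t) / 2) * (ascPochhammer ℂ n).eval ((1 - t) / 2)
      / ((ascPochhammer ℂ n).eval (2 - t) * n.factorial) = regularizedQuotient m n t := by
  have hu : (2 * m + 1 - t) / 2 ≠ 0 := div_ne_zero (sub_ne_zero.2 ht.symm) two_ne_zero
  have h_root_m : (1 - t) / 2 + m = (2 * m + 1 - t) / 2 := by ring
  have h_root_two_m : 2 - t + ((2 * m - 1 : ℕ) : ℂ) = 2 * m + 1 - t := by
    push_cast [Nat.cast_sub (by omega : 1 ≤ 2 * m)]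
    ring
  rw [ascPochhammer_eval_eq_mul_cofactor (j := m) (by omega) ((1 - t) / 2),
    ascPochhammer_eval_eq_mul_cofactor (j := 2 * m - 1) (by omega) (2 - t), h_root_m,
    h_root_two_m, regularizedQuotient]
  refine (congr_arg₂ (· / ·) ?_ ?_).trans (mul_div_mul_left _ _ hu) <;> ring

theorem continuousAt_regularizedQuotient (hm : 1 ≤ m) :
    ContinuousAt (regularizedQuotient m n) (2 * m + 1) := by
  have hden : (ascPochhammerCofactor ℂ n (2 * m - 1)).eval (2 - (2 * m + 1) : ℂ) ≠ 0 := by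
    rw [two_sub_two_mul_add_one hm, ascPochhammerCofactor_eval_neg]
    simp [Nat.factorial_ne_zero]
  unfold regularizedQuotient
  fun_prop (disch := simp [hden, Nat.factorial_ne_zero])

theorem regularizedQuotient_two_mul_add_one (hm : 1 ≤ m) (hn : 2 * m ≤ n) :
    regularizedQuotient m n (2 * m + 1) =
      -((-1 : ℂ) ^ m / 2)
        * ((((3 * m).factorial : ℂ) * ((m - 1).factorial : ℂ))
            / (((2 * m - 1).factorial : ℂ) * ((2 * m).factorial : ℂ)))
        * (((ascPochhammer ℂ (n - 2 * m)).eval ((3 * (m : ℂ) + 1))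
              * (ascPochhammer ℂ (n - 2 * m)).eval (m : ℂ))
            / ((ascPochhammer ℂ (n - 2 * m)).eval (2 * (m : ℂ) + 1)
                * ((n - 2 * m).factorial : ℂ))) := by
  obtain ⟨N, rfl⟩ : ∃ N, n = 2 * m + N := ⟨n - 2 * m, by omega⟩
  have h_num : (1 + (2 * m + 1)) / 2 = (m : ℂ) + 1 := by ring
  have h_root : (1 - (2 * m + 1)) / 2 = -(m : ℂ) := by ring
  have h_three : 3 * (m : ℂ) + 1 = ((3 * m : ℕ) : ℂ) + 1 := by push_cast; ring
  have h_two : 2 * (m : ℂ) + 1 = ((2 * m : ℕ) : ℂ) + 1 := by push_cast; ring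
  have h_one : (m : ℂ) = ((m - 1 : ℕ) : ℂ) + 1 := by push_cast [Nat.cast_sub hm]; ring
  have h_odd : (-1 : ℂ) ^ (2 * m - 1) = -1 := Odd.neg_one_pow ⟨m - 1, by omega⟩
  unfold regularizedQuotient
  rw [h_num, ascPochhammer_eval_natCast_add_one, h_root, two_sub_two_mul_add_one hm,
    ascPochhammerCofactor_eval_neg, ascPochhammerCofactor_eval_neg, h_three, h_two, h_one, h_odd,
    Nat.add_sub_cancel_left]
  simp only [ascPochhammer_eval_natCast_add_one]
  rw [show m - 1 + N = 2 * m + N - m - 1 by omega, show 3 * m + N = m + (2 * m + N) by omega,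
    show 2 * m + N - (2 * m - 1) - 1 = N by omega]
  field_simp [Nat.factorial_ne_zero]

end RegularizedQuotient

/-- Removable-singularity limit at `t = 2m+1` of the hypergeometric coefficient
`((1+t)/2)ₙ((1-t)/2)ₙ / ((2-t)ₙ · n!)` for `m ≥ 1`, `n ≥ 2m`. Here `(q)ₙ` is the
ascending Pochhammer symbol. -/
theorem pochhammer_quotient_limit (m n : ℕ) (hm : 1 ≤ m) (hn : 2 * m ≤ n) :
    Tendsto
      (fun t : ℂ =>
        (ascPochhammer ℂ n).eval ((1 + t) / 2) * (ascPochhammer ℂ n).eval ((1 - t) / 2)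
          / ((ascPochhammer ℂ n).eval (2 - t) * (n.factorial : ℂ)))
      (nhdsWithin (2 * (m : ℂ) + 1) {(2 * (m : ℂ) + 1)}ᶜ)
      (nhds (-((-1 : ℂ) ^ m / 2)
        * ((((3 * m).factorial : ℂ) * ((m - 1).factorial : ℂ))
            / (((2 * m - 1).factorial : ℂ) * ((2 * m).factorial : ℂ)))
        * (((ascPochhammer ℂ (n - 2 * m)).eval ((3 * (m : ℂ) + 1))
              * (ascPochhammer ℂ (n - 2 * m)).eval (m : ℂ))
            / ((ascPochhammer ℂ (n - 2 * m)).eval (2 * (m : ℂ) + 1)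
                * ((n - 2 * m).factorial : ℂ))))) := by
  rw [← regularizedQuotient_two_mul_add_one hm hn]
  refine (continuousAt_regularizedQuotient hm).continuousWithinAt.tendsto.congr' ?_
  filter_upwards [self_mem_nhdsWithin] with t ht
  exact (quotient_eq_regularizedQuotient hm hn ht).symm
end
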